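/- Let A be a 3×3 real sign pattern. If D2(M) ≥ 0 for every M ∈ Q_A, then either D2(M) > 0 for every M ∈ Q_A or D2(M) = 0 for every M ∈ Q_A. Likewise, if D2(M) ≤ 0 for every M ∈ Q_A, then either D2(M) < 0 for every M ∈ Q_A or D2(M) = 0 for every M ∈ Q_A. In other words, for a 3-pattern, D2 on the qualitative class is either identically positive, identically negative, identically zero, or takes both signs. -/

import Mathlib

/-- The `k`-th minor-sum of a `3 × 3` real matrix `M`: the sum of its `k × k`
principal minors, i.e. `(-1)^k` times the coefficient of `X^(3-k)` in the
characteristic polynomial. -/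
noncomputable def J3 (M : Matrix (Fin 3) (Fin 3) ℝ) (k : ℕ) : ℝ :=
  (-1) ^ k * (Matrix.charpoly M).coeff (3 - k)

/-- The determinant of the second additive compound of a `3 × 3` real matrix. -/
noncomputable def D2 (M : Matrix (Fin 3) (Fin 3) ℝ) : ℝ :=
  J3 M 1 * J3 M 2 - J3 M 3

/-- The qualitative class of a sign pattern `A`. -/
def qualClass (A : Matrix (Fin 3) (Fin 3) ℝ) : Set (Matrix (Fin 3) (Fin 3) ℝ) :=
  {M | ∀ i j, Real.sign (M i j) = Real.sign (A i j)}


/-!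
Write `M = !![a, b, c; d, e, f; g, h, i]`. Then `D2 M` is the sum of the six terms
`(a + e)(a + i)(e + i)`, `-(a + e)bd`, `-(a + i)cg`, `-(e + i)fh`, `-bfg` and `-cdh`.

If `D2 ≥ 0` on `Q_A`, every term is `≥ 0` on `Q_A`: by continuity `D2` stays nonnegative on
Hadamard products of members of `Q_A` with nonnegative masks, and a suitable mask isolates each
term (for `-(a + e)bd`, keep the `{a, b, d, e}` block, shrink `a, e` and divide out).
A term that is nonnegative on `Q_A` and vanishes at one of its points vanishes on all of it, since
this forces entries, or sums of two diagonal entries, to vanish throughout the pattern; and the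
dichotomy "positive everywhere or zero everywhere" is stable under sums.
The nonpositive case is the nonnegative one for `-A`.
-/

open Matrix Polynomial Filter Topology

theorem Real.sign_mul_of_pos {c : ℝ} (hc : 0 < c) (x : ℝ) : Real.sign (c * x) = Real.sign x := by
  rcases lt_trichotomy x 0 with hx | rfl | hx
  · rw [Real.sign_of_neg hx, Real.sign_of_neg (mul_neg_of_pos_of_neg hc hx)]
  · rw [mul_zero]
  · rw [Real.sign_of_pos hx, Real.sign_of_pos (mul_pos hc hx)]

theorem nonneg_of_forall_pos_nonneg {f : ℝ → ℝ} (hf : Continuous f) (h : ∀ t > 0, 0 ≤ f t) :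
    0 ≤ f 0 :=
  ge_of_tendsto (hf.continuousWithinAt (s := Set.Ioi 0)) (eventually_nhdsWithin_of_forall h)

section Terms

variable (M : Matrix (Fin 3) (Fin 3) ℝ)

def diagTerm : ℝ := (M 0 0 + M 1 1) * (M 0 0 + M 2 2) * (M 1 1 + M 2 2)

def pairTerm (i j : Fin 3) : ℝ := -((M i i + M j j) * (M i j * M j i))

def cycleTerm : ℝ := -(M 0 1 * M 1 2 * M 2 0)

theorem charpoly_fin_three :
    M.charpoly = X ^ 3 - C (M 0 0 + M 1 1 + M 2 2) * X ^ 2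
      + C (M 0 0 * M 1 1 - M 0 1 * M 1 0 + M 0 0 * M 2 2 - M 0 2 * M 2 0
        + M 1 1 * M 2 2 - M 1 2 * M 2 1) * X - C M.det := by
  rw [Matrix.charpoly, det_fin_three, det_fin_three]
  simp only [charmatrix_apply_eq, charmatrix_apply_ne, ne_eq, Fin.reduceEq, not_false_eq_true,
    map_sub, map_mul, map_add]
  ring

theorem D2_eq : D2 M = diagTerm M + pairTerm M 0 1 + pairTerm M 0 2 + pairTerm M 1 2
    + cycleTerm M + cycleTerm Mᵀ := by
  simp only [D2, J3, charpoly_fin_three, coeff_sub, coeff_add, coeff_C_mul, coeff_X_pow,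
    coeff_X, coeff_C, det_fin_three, diagTerm, pairTerm, cycleTerm, transpose_apply]
  norm_num
  ring

end Terms

def PosOrZeroOn {α : Type*} (f : α → ℝ) (s : Set α) : Prop :=
  (∀ x ∈ s, 0 < f x) ∨ (∀ x ∈ s, f x = 0)

namespace PosOrZeroOn

variable {α β : Type*} {f g : α → ℝ} {s : Set α}

theorem of_nonneg (hf : ∀ x ∈ s, 0 ≤ f x) (hzero : ∀ x ∈ s, f x = 0 → ∀ y ∈ s, f y = 0) :
    PosOrZeroOn f s := by
  by_cases h : ∃ x ∈ s, f x = 0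
  · obtain ⟨x, hx, hfx⟩ := h
    exact Or.inr (hzero x hx hfx)
  · exact Or.inl fun x hx => (hf x hx).lt_of_ne fun h0 => h ⟨x, hx, h0.symm⟩

theorem add (hf : PosOrZeroOn f s) (hg : PosOrZeroOn g s) : PosOrZeroOn (f + g) s := by
  rcases hf with hf | hf <;> rcases hg with hg | hg
  · exact Or.inl fun x hx => add_pos (hf x hx) (hg x hx)
  · exact Or.inl fun x hx => by simp [hf x hx, hg x hx]
  · exact Or.inl fun x hx => by simp [hf x hx, hg x hx]
  · exact Or.inr fun x hx => by simp [hf x hx, hg x hx]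

theorem comp {t : Set β} {h : α → β} {f : β → ℝ} (hf : PosOrZeroOn f t) (hh : Set.MapsTo h s t) :
    PosOrZeroOn (f ∘ h) s :=
  hf.imp (fun hf _ hx => hf _ (hh hx)) (fun hf _ hx => hf _ (hh hx))

end PosOrZeroOn

section QualClass

variable {A M N : Matrix (Fin 3) (Fin 3) ℝ}

theorem eq_zero_iff_of_mem_qualClass (hM : M ∈ qualClass A) (hN : N ∈ qualClass A) (i j : Fin 3) :
    M i j = 0 ↔ N i j = 0 := by
  rw [← Real.sign_eq_zero_iff, hM i j, ← hN i j, Real.sign_eq_zero_iff]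

theorem hadamard_mem_qualClass {S : Matrix (Fin 3) (Fin 3) ℝ} (hS : ∀ i j, 0 < S i j)
    (hM : M ∈ qualClass A) : S ⊙ M ∈ qualClass A := fun i j => by
  rw [hadamard_apply, Real.sign_mul_of_pos (hS i j), hM i j]

theorem transpose_mem_qualClass_transpose (hM : M ∈ qualClass A) : Mᵀ ∈ qualClass Aᵀ :=
  fun i j => hM j i

theorem neg_mem_qualClass_neg (hM : M ∈ qualClass A) : -M ∈ qualClass (-A) := fun i j => by
  rw [Matrix.neg_apply, Matrix.neg_apply, Real.sign_neg, Real.sign_neg, hM i j]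

end QualClass

theorem continuous_D2 : Continuous D2 := by
  simp only [funext D2_eq, diagTerm, pairTerm, cycleTerm, transpose_apply]
  fun_prop

theorem D2_transpose (M : Matrix (Fin 3) (Fin 3) ℝ) : D2 Mᵀ = D2 M := by
  simp only [D2, J3, charpoly_transpose]

theorem D2_neg (M : Matrix (Fin 3) (Fin 3) ℝ) : D2 (-M) = -D2 M := by
  simp only [D2_eq, diagTerm, pairTerm, cycleTerm, Matrix.neg_apply, transpose_apply]
  ring

theorem D2_hadamard_nonneg {A M S : Matrix (Fin 3) (Fin 3) ℝ} (hD : ∀ N ∈ qualClass A, 0 ≤ D2 N)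
    (hM : M ∈ qualClass A) (hS : ∀ i j, 0 ≤ S i j) : 0 ≤ D2 (S ⊙ M) := by
  let Sε : ℝ → Matrix (Fin 3) (Fin 3) ℝ := fun ε => of fun i j => S i j + ε
  have hcont : Continuous fun ε => D2 (Sε ε ⊙ M) :=
    continuous_D2.comp (continuous_pi fun i => continuous_pi fun j => by
      simp only [Sε, hadamard_apply, of_apply]; fun_prop)
  have h0 : Sε 0 = S := by ext i j; simp [Sε]
  have hpos : ∀ ε > 0, 0 ≤ D2 (Sε ε ⊙ M) := fun ε hε =>
    hD _ (hadamard_mem_qualClass (fun i j => by simp only [Sε, of_apply]; linarith [hS i j]) hM)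
  simpa only [h0] using nonneg_of_forall_pos_nonneg hcont hpos

section TermsNonneg

variable {A M : Matrix (Fin 3) (Fin 3) ℝ}

theorem diagTerm_nonneg (hD : ∀ N ∈ qualClass A, 0 ≤ D2 N) (hM : M ∈ qualClass A) :
    0 ≤ diagTerm M := by
  have hS : ∀ i j, 0 ≤ (1 : Matrix (Fin 3) (Fin 3) ℝ) i j := fun i j => by
    rw [one_apply]; split_ifs <;> norm_num
  have hmask : D2 (1 ⊙ M) = diagTerm M := by
    simp [one_hadamard, D2_eq, diagTerm, pairTerm, cycleTerm]
  exact hmask ▸ D2_hadamard_nonneg hD hM hS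

theorem cycleTerm_nonneg (hD : ∀ N ∈ qualClass A, 0 ≤ D2 N) (hM : M ∈ qualClass A) :
    0 ≤ cycleTerm M := by
  let S : Matrix (Fin 3) (Fin 3) ℝ := !![0, 1, 0; 0, 0, 1; 1, 0, 0]
  have hS : ∀ i j, 0 ≤ S i j := fun i j => by fin_cases i <;> fin_cases j <;> simp [S]
  have hmask : D2 (S ⊙ M) = cycleTerm M := by
    simp [S, D2_eq, diagTerm, pairTerm, cycleTerm, hadamard_apply]
  exact hmask ▸ D2_hadamard_nonneg hD hM hS

theorem pairTerm_nonneg (hD : ∀ N ∈ qualClass A, 0 ≤ D2 N) (hM : M ∈ qualClass A) {i j : Fin 3}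
    (hij : i ≠ j) : 0 ≤ pairTerm M i j := by
  let S : ℝ → Matrix (Fin 3) (Fin 3) ℝ := fun t =>
    of fun k l => if (k = i ∨ k = j) ∧ (l = i ∨ l = j) then (if k = l then t else 1) else 0
  let g : ℝ → ℝ := fun t => pairTerm M i j + t ^ 2 * ((M i i + M j j) * M i i * M j j)
  have hmask : ∀ t, D2 (S t ⊙ M) = t * g t := fun t => by
    fin_cases i <;> fin_cases j <;>
      simp_all [S, g, D2_eq, diagTerm, pairTerm, cycleTerm, hadamard_apply] <;> ring
  have hg : ∀ t > 0, 0 ≤ g t := fun t ht => by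
    refine (mul_nonneg_iff_of_pos_left ht).mp (hmask t ▸ D2_hadamard_nonneg hD hM fun k l => ?_)
    simp only [S, of_apply]; split_ifs <;> linarith
  simpa [g] using nonneg_of_forall_pos_nonneg (by fun_prop) hg

end TermsNonneg

theorem eq_zero_and_eq_zero_of_mul_nonneg_of_add_eq_zero {x y : ℝ} (hxy : 0 ≤ x * y)
    (h : x + y = 0) : x = 0 ∧ y = 0 := by
  constructor <;> nlinarith

-- With `a + e = 1` and `|i| < 1`, the product has the sign of `a * e`.
theorem mul_nonneg_of_forall_sign_eq {a₀ e₀ i₀ : ℝ}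
    (h : ∀ a e i : ℝ, Real.sign a = Real.sign a₀ → Real.sign e = Real.sign e₀ →
      Real.sign i = Real.sign i₀ → 0 ≤ (a + e) * (a + i) * (e + i)) :
    0 ≤ a₀ * e₀ := by
  by_contra hneg
  have hi : Real.sign (Real.sign i₀ / 4) = Real.sign i₀ := by
    rw [div_eq_inv_mul, Real.sign_mul_of_pos (by norm_num)]
    rcases Real.sign_apply_eq i₀ with h | h | h <;> simp [h, Real.sign_of_neg]
  have hs := Real.sign_apply_eq i₀
  rcases mul_neg_iff.mp (not_le.mp hneg) with ⟨ha, he⟩ | ⟨ha, he⟩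
  · have := h 2 (-1) _ (by simp [Real.sign_of_pos ha, Real.sign_of_pos])
      (by simp [Real.sign_of_neg he, Real.sign_of_neg]) hi
    rcases hs with hs | hs | hs <;> rw [hs] at this <;> norm_num at this
  · have := h (-1) 2 _ (by simp [Real.sign_of_neg ha, Real.sign_of_neg])
      (by simp [Real.sign_of_pos he, Real.sign_of_pos]) hi
    rcases hs with hs | hs | hs <;> rw [hs] at this <;> norm_num at this

section Rigidity

variable {A M₀ : Matrix (Fin 3) (Fin 3) ℝ}

theorem updateDiag_mem_qualClass (hM₀ : M₀ ∈ qualClass A) {d : Fin 3 → ℝ}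
    (hd : ∀ k, Real.sign (d k) = Real.sign (M₀ k k)) :
    (of fun k l => if k = l then d k else M₀ k l) ∈ qualClass A := fun k l => by
  by_cases hkl : k = l
  · subst hkl; simp [hd, hM₀ k k]
  · simp [hkl, hM₀ k l]

theorem cycleTerm_posOrZeroOn (hD : ∀ N ∈ qualClass A, 0 ≤ D2 N) :
    PosOrZeroOn cycleTerm (qualClass A) :=
  .of_nonneg (fun _ hM => cycleTerm_nonneg hD hM) fun M₀ hM₀ h₀ M hM => by
    have hz := eq_zero_iff_of_mem_qualClass hM hM₀
    simp only [cycleTerm, neg_eq_zero, mul_eq_zero] at h₀ ⊢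
    rwa [hz, hz, hz]

theorem pairTerm_posOrZeroOn (hD : ∀ N ∈ qualClass A, 0 ≤ D2 N) {i j : Fin 3} (hij : i ≠ j) :
    PosOrZeroOn (fun M => pairTerm M i j) (qualClass A) :=
  .of_nonneg (fun _ hM => pairTerm_nonneg hD hM hij) fun M₀ hM₀ h₀ M hM => by
    have hz := eq_zero_iff_of_mem_qualClass hM hM₀
    simp only [pairTerm, neg_eq_zero, mul_eq_zero] at h₀ ⊢
    rcases h₀ with hsum | hprod
    · by_cases hprod : M₀ i j = 0 ∨ M₀ j i = 0
      · exact Or.inr (by rwa [hz, hz])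
      have hu : M₀ i j * M₀ j i ≠ 0 := by
        rw [not_or] at hprod; exact mul_ne_zero hprod.1 hprod.2
      -- rescaling the entry `(i, i)` moves `M₀ i i + M₀ j j` off zero in both directions
      let S : ℝ → Matrix (Fin 3) (Fin 3) ℝ := fun c => of fun k l => if k = i ∧ l = i then c else 1
      have hscale : ∀ c > 0, 0 ≤ -((c * M₀ i i + M₀ j j) * (M₀ i j * M₀ j i)) := fun c hc => by
        have hS : ∀ k l, 0 < S c k l := fun k l => by
          simp only [S, of_apply]; split_ifs <;> linarith
        simpa [pairTerm, S, hadamard_apply, hij, hij.symm] using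
          pairTerm_nonneg hD (hadamard_mem_qualClass hS hM₀) hij
      have hjj : M₀ j j = -M₀ i i := by linarith
      have h2 := hscale 2 two_pos
      have h3 := hscale (1 / 2) (by norm_num)
      rw [hjj] at h2 h3
      have hii : M₀ i i = 0 :=
        (mul_eq_zero.mp (by linarith : M₀ i i * (M₀ i j * M₀ j i) = 0)).resolve_right hu
      exact Or.inl (by rw [(hz i i).mpr hii, (hz j j).mpr (by linarith), add_zero])
    · exact Or.inr (by rwa [hz, hz])

theorem diagTerm_posOrZeroOn (hD : ∀ N ∈ qualClass A, 0 ≤ D2 N) :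
    PosOrZeroOn diagTerm (qualClass A) :=
  .of_nonneg (fun _ hM => diagTerm_nonneg hD hM) fun M₀ hM₀ h₀ M hM => by
    have hdiag : ∀ a e i : ℝ, Real.sign a = Real.sign (M₀ 0 0) →
        Real.sign e = Real.sign (M₀ 1 1) → Real.sign i = Real.sign (M₀ 2 2) →
        0 ≤ (a + e) * (a + i) * (e + i) := fun a e i ha he hi => by
      have hN := updateDiag_mem_qualClass hM₀ (d := ![a, e, i]) fun k => by
        fin_cases k <;> assumption
      simpa [diagTerm] using diagTerm_nonneg hD hN
    have h01 := mul_nonneg_of_forall_sign_eq hdiag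
    have h02 := mul_nonneg_of_forall_sign_eq fun a i e ha hi he =>
      (hdiag a e i ha he hi).trans_eq (by ring)
    have h12 := mul_nonneg_of_forall_sign_eq fun e i a he hi ha =>
      (hdiag a e i ha he hi).trans_eq (by ring)
    have hz := eq_zero_iff_of_mem_qualClass hM hM₀
    have hsum : ∀ k l, 0 ≤ M₀ k k * M₀ l l → M₀ k k + M₀ l l = 0 → M k k + M l l = 0 :=
      fun k l hkl h => by
        obtain ⟨hk, hl⟩ := eq_zero_and_eq_zero_of_mul_nonneg_of_add_eq_zero hkl h
        rw [(hz k k).mpr hk, (hz l l).mpr hl, add_zero]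
    simp only [diagTerm, mul_eq_zero] at h₀ ⊢
    rcases h₀ with (h | h) | h
    exacts [Or.inl (Or.inl (hsum 0 1 h01 h)), Or.inl (Or.inr (hsum 0 2 h02 h)),
      Or.inr (hsum 1 2 h12 h)]

end Rigidity

theorem D2_posOrZeroOn {A : Matrix (Fin 3) (Fin 3) ℝ} (hD : ∀ M ∈ qualClass A, 0 ≤ D2 M) :
    PosOrZeroOn D2 (qualClass A) := by
  have hDt : ∀ M ∈ qualClass Aᵀ, 0 ≤ D2 M := fun M hM =>
    D2_transpose M ▸ hD _ (transpose_mem_qualClass_transpose hM)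
  have hsplit : D2 = diagTerm + (pairTerm · 0 1) + (pairTerm · 0 2) + (pairTerm · 1 2)
      + cycleTerm + cycleTerm ∘ transpose := funext D2_eq
  rw [hsplit]
  exact (diagTerm_posOrZeroOn hD).add (pairTerm_posOrZeroOn hD (by decide)) |>.add
    (pairTerm_posOrZeroOn hD (by decide)) |>.add (pairTerm_posOrZeroOn hD (by decide)) |>.add
    (cycleTerm_posOrZeroOn hD) |>.add
    ((cycleTerm_posOrZeroOn hDt).comp fun _ => transpose_mem_qualClass_transpose)

theorem threePattern_semidefinite_implies_definite_or_zero
    (A : Matrix (Fin 3) (Fin 3) ℝ) :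
    ((∀ M ∈ qualClass A, 0 ≤ D2 M) →
      (∀ M ∈ qualClass A, 0 < D2 M) ∨ (∀ M ∈ qualClass A, D2 M = 0)) ∧
    ((∀ M ∈ qualClass A, D2 M ≤ 0) →
      (∀ M ∈ qualClass A, D2 M < 0) ∨ (∀ M ∈ qualClass A, D2 M = 0)) := by
  refine ⟨D2_posOrZeroOn, fun hD => ?_⟩
  have hDneg : ∀ M ∈ qualClass (-A), 0 ≤ D2 M := fun M hM => by
    simpa [D2_neg] using hD (-M) (neg_neg A ▸ neg_mem_qualClass_neg hM)
  simpa [PosOrZeroOn, D2_neg] using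
    (D2_posOrZeroOn hDneg).comp fun _ => neg_mem_qualClass_neg (A := A)
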